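/- arXiv:2303.09948 — 3 statements merged into one kernel-verified Lean document; each statement's English description precedes it below -/
import Mathlib

section
/- Filtration refinement: Let Γ be a Sub-closed set of formulas, M = (W,(R_◇),θ) a model, and M̂ a Γ-filtration of M whose carrier is W/∼_Δ for some finite set Δ of formulas. Then for every equivalence ∼ on W finer than ∼_Δ there exists a Γ-filtration M̂' of M with carrier W/∼ such that for every formula φ, M̂ ⊨ φ iff M̂' ⊨ φ. Moreover the map sending a ∼-class to the ∼_Δ-class containing it satisfies: M̂',u ⊨ φ iff M̂, uΔ ⊨ φ for all u and φ. -/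
inductive Fm (A : Type) : Type
  | bot : Fm A
  | var : ℕ → Fm A
  | imp : Fm A → Fm A → Fm A
  | dia : A → Fm A → Fm A

namespace Fm
variable {A B : Type}
def neg (φ : Fm A) : Fm A := imp φ bot
def disj (φ ψ : Fm A) : Fm A := imp (neg φ) ψ
def conj (φ ψ : Fm A) : Fm A := neg (imp φ (neg ψ))
def equiv (φ ψ : Fm A) : Fm A := conj (imp φ ψ) (imp ψ φ)
def box (a : A) (φ : Fm A) : Fm A := neg (dia a (neg φ))
def map (f : A → B) : Fm A → Fm B
  | bot => bot
  | var n => var n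
  | imp φ ψ => imp (map f φ) (map f ψ)
  | dia a φ => dia (f a) (map f φ)
end Fm

structure Model (A : Type) where
  W : Type
  R : A → W → W → Prop
  V : ℕ → W → Prop

def Sat {A : Type} (M : Model A) : M.W → Fm A → Prop
  | _, .bot => False
  | x, .var n => M.V n x
  | x, .imp φ ψ => Sat M x φ → Sat M x ψ
  | x, .dia a φ => ∃ y, M.R a x y ∧ Sat M y φ

def Model.valid {A : Type} (M : Model A) (φ : Fm A) : Prop := ∀ x, Sat M x φ

def Model.validSet {A : Type} (M : Model A) (L : Set (Fm A)) : Prop := ∀ φ ∈ L, M.valid φ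

def SubClosed {A : Type} (Γ : Set (Fm A)) : Prop :=
  (∀ φ ψ : Fm A, Fm.imp φ ψ ∈ Γ → φ ∈ Γ ∧ ψ ∈ Γ) ∧
  (∀ (a : A) (φ : Fm A), Fm.dia a φ ∈ Γ → φ ∈ Γ)

/-- `x ∼_Γ y`: x and y satisfy the same formulas of Γ in M. -/
def ModEqv {A : Type} (M : Model A) (Γ : Set (Fm A)) (x y : M.W) : Prop :=
  ∀ φ ∈ Γ, (Sat M x φ ↔ Sat M y φ)

def eqvSetoid {A : Type} (M : Model A) (Γ : Set (Fm A)) : Setoid M.W :=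
  ⟨ModEqv M Γ, ⟨fun _ _ _ => Iff.rfl, fun h φ hφ => (h φ hφ).symm,
    fun h1 h2 φ hφ => (h1 φ hφ).trans (h2 φ hφ)⟩⟩

def filtModel {A : Type} (M : Model A) (s : Setoid M.W)
    (R' : A → Quotient s → Quotient s → Prop) (V' : ℕ → Quotient s → Prop) : Model A :=
  ⟨Quotient s, R', V'⟩

/-- `(filtModel M s R' V')` is a Γ-filtration of M through the equivalence s. -/
structure IsModalFiltration {A : Type} (M : Model A) (Γ : Set (Fm A)) (s : Setoid M.W)
    (R' : A → Quotient s → Quotient s → Prop) (V' : ℕ → Quotient s → Prop) : Prop where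
  refines : ∀ x y : M.W, s.r x y → ModEqv M Γ x y
  val : ∀ n : ℕ, Fm.var n ∈ Γ → ∀ x : M.W, (V' n (Quotient.mk s x) ↔ M.V n x)
  min_sub : ∀ (a : A) (x y : M.W), M.R a x y → R' a (Quotient.mk s x) (Quotient.mk s y)
  sub_max : ∀ (a : A) (x y : M.W), R' a (Quotient.mk s x) (Quotient.mk s y) →
      ∀ φ : Fm A, Fm.dia a φ ∈ Γ → Sat M y φ → Sat M x (Fm.dia a φ)

/-- L admits definable filtration. -/
def AdmitsDefFilt {A : Type} (L : Set (Fm A)) : Prop :=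
  ∀ M : Model A, M.validSet L → ∀ Γ : Set (Fm A), Γ.Finite → SubClosed Γ →
    ∃ Δ : Set (Fm A), Δ.Finite ∧ Γ ⊆ Δ ∧
      ∃ (R' : A → Quotient (eqvSetoid M Δ) → Quotient (eqvSetoid M Δ) → Prop)
        (V' : ℕ → Quotient (eqvSetoid M Δ) → Prop),
        Finite (Quotient (eqvSetoid M Δ)) ∧
        IsModalFiltration M Γ (eqvSetoid M Δ) R' V' ∧
        (filtModel M (eqvSetoid M Δ) R' V').validSet L

def liftQ {α : Type} (t s : Setoid α) (ht : ∀ x y : α, t.r x y → s.r x y) :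
    Quotient t → Quotient s :=
  Quotient.lift (Quotient.mk s) (fun a b h => Quotient.sound (ht a b h))

/-!
Relate and valuate ∼-classes exactly as the ∼_Δ-classes containing them. Then the surjection
u ↦ uΔ is a bounded morphism onto M̂, so it preserves truth pointwise, and, being onto, validity.
The filtration conditions for the new model are those of M̂ read through the same map, since
both only speak about classes of points of W.
-/

section Comap

variable {A : Type}

def Model.comap (N : Model A) {W : Type} (f : W → N.W) : Model A :=
  ⟨W, fun a u v => N.R a (f u) (f v), fun n u => N.V n (f u)⟩

theorem sat_comap (N : Model A) {W : Type} {f : W → N.W} (hf : Function.Surjective f)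
    (φ : Fm A) (u : W) : Sat (N.comap f) u φ ↔ Sat N (f u) φ := by
  induction φ generalizing u with
  | bot => exact Iff.rfl
  | var n => exact Iff.rfl
  | imp φ ψ ihφ ihψ => exact imp_congr (ihφ u) (ihψ u)
  | dia a φ ih =>
    constructor
    · rintro ⟨v, huv, hv⟩
      exact ⟨f v, huv, (ih v).mp hv⟩
    · rintro ⟨y, huy, hy⟩
      obtain ⟨v, rfl⟩ := hf y
      exact ⟨v, huy, (ih v).mpr hy⟩

theorem Model.valid_comap (N : Model A) {W : Type} {f : W → N.W} (hf : Function.Surjective f)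
    (φ : Fm A) : (N.comap f).valid φ ↔ N.valid φ := by
  show (∀ u : W, Sat (N.comap f) u φ) ↔ ∀ x, Sat N x φ
  simp only [sat_comap N hf]
  exact (hf.forall (p := fun x => Sat N x φ)).symm

theorem liftQ_surjective {α : Type} (t s : Setoid α) (ht : ∀ x y : α, t.r x y → s.r x y) :
    Function.Surjective (liftQ t s ht) := by
  rintro ⟨x⟩
  exact ⟨Quotient.mk t x, rfl⟩

theorem IsModalFiltration.comap_liftQ {M : Model A} {Γ : Set (Fm A)} {s t : Setoid M.W}
    {R' : A → Quotient s → Quotient s → Prop} {V' : ℕ → Quotient s → Prop}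
    (hf : IsModalFiltration M Γ s R' V') (ht : ∀ x y : M.W, t.r x y → s.r x y) :
    IsModalFiltration M Γ t (fun a u v => R' a (liftQ t s ht u) (liftQ t s ht v))
      (fun n u => V' n (liftQ t s ht u)) where
  refines x y hxy := hf.refines x y (ht x y hxy)
  val := hf.val
  min_sub := hf.min_sub
  sub_max := hf.sub_max

end Comap

theorem filtration_refinement_general {A : Type} (M : Model A) (Γ Δ : Set (Fm A))
    (R' : A → Quotient (eqvSetoid M Δ) → Quotient (eqvSetoid M Δ) → Prop)
    (V' : ℕ → Quotient (eqvSetoid M Δ) → Prop)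
    (hf : IsModalFiltration M Γ (eqvSetoid M Δ) R' V')
    (t : Setoid M.W) (ht : ∀ x y : M.W, t.r x y → (eqvSetoid M Δ).r x y) :
    ∃ (R'' : A → Quotient t → Quotient t → Prop) (V'' : ℕ → Quotient t → Prop),
      IsModalFiltration M Γ t R'' V'' ∧
      (∀ (u : Quotient t) (φ : Fm A),
        Sat (filtModel M t R'' V'') u φ ↔
          Sat (filtModel M (eqvSetoid M Δ) R' V') (liftQ t (eqvSetoid M Δ) ht u) φ) ∧
      (∀ φ : Fm A,
        (filtModel M t R'' V'').valid φ ↔ (filtModel M (eqvSetoid M Δ) R' V').valid φ) := by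
  have hsurj := liftQ_surjective t (eqvSetoid M Δ) ht
  exact ⟨_, _, hf.comap_liftQ ht,
    fun u φ => sat_comap (filtModel M (eqvSetoid M Δ) R' V') hsurj φ u,
    Model.valid_comap (filtModel M (eqvSetoid M Δ) R' V') hsurj⟩

/-- Filtration refinement (Proposition 1). -/
theorem filtration_refinement {A : Type} (M : Model A) (Γ Δ : Set (Fm A))
    (hΓ : SubClosed Γ) (hΔfin : Δ.Finite)
    (R' : A → Quotient (eqvSetoid M Δ) → Quotient (eqvSetoid M Δ) → Prop)
    (V' : ℕ → Quotient (eqvSetoid M Δ) → Prop)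
    (hf : IsModalFiltration M Γ (eqvSetoid M Δ) R' V')
    (t : Setoid M.W) (ht : ∀ x y : M.W, t.r x y → (eqvSetoid M Δ).r x y) :
    ∃ (R'' : A → Quotient t → Quotient t → Prop) (V'' : ℕ → Quotient t → Prop),
      IsModalFiltration M Γ t R'' V'' ∧
      (∀ (u : Quotient t) (φ : Fm A),
        Sat (filtModel M t R'' V'') u φ ↔
          Sat (filtModel M (eqvSetoid M Δ) R' V') (liftQ t (eqvSetoid M Δ) ht u) φ) ∧
      (∀ φ : Fm A,
        (filtModel M t R'' V'').valid φ ↔ (filtModel M (eqvSetoid M Δ) R' V').valid φ) :=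
  filtration_refinement_general M Γ Δ R' V' hf t ht
end

section
/- The logic K + {◇◇◇p → ◇p} does not admit strict filtration: there is a finite model M of this logic and a finite Sub-closed set Γ such that no Γ-filtration of M through the equivalence ∼_Γ itself is a model of the logic. Specifically, take M with W = {x, y, y', z, u}, R = {(x,y), (y',z), (z,u)}, θ(p) = {x}, θ(q) = {y, y'}, θ(r) = {u}, and Γ = {p, q, r, ◇r}; then any Γ-filtration of M on W/∼_Γ refutes ◇◇◇r → ◇r at [x]. -/
def substF {A : Type} (σ : ℕ → Fm A) : Fm A → Fm A
  | .bot => .bot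
  | .var n => σ n
  | .imp φ ψ => .imp (substF σ φ) (substF σ ψ)
  | .dia a φ => .dia a (substF σ φ)

def Tautology {A : Type} (φ : Fm A) : Prop :=
  ∀ v : Fm A → Prop, ¬ v Fm.bot → (∀ a b : Fm A, v (Fm.imp a b) ↔ (v a → v b)) → v φ

structure IsNormalLogic {A : Type} (L : Set (Fm A)) : Prop where
  taut : ∀ φ : Fm A, Tautology φ → φ ∈ L
  dia_bot : ∀ a : A, Fm.equiv (Fm.dia a Fm.bot) Fm.bot ∈ L
  dia_or : ∀ (a : A) (φ ψ : Fm A),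
    Fm.equiv (Fm.dia a (Fm.disj φ ψ)) (Fm.disj (Fm.dia a φ) (Fm.dia a ψ)) ∈ L
  mp : ∀ φ ψ : Fm A, Fm.imp φ ψ ∈ L → φ ∈ L → ψ ∈ L
  subst : ∀ φ ∈ L, ∀ σ : ℕ → Fm A, substF σ φ ∈ L
  mono : ∀ (a : A) (φ ψ : Fm A), Fm.imp φ ψ ∈ L → Fm.imp (Fm.dia a φ) (Fm.dia a ψ) ∈ L

def NormalClosure {A : Type} (S : Set (Fm A)) : Set (Fm A) :=
  {φ | ∀ L : Set (Fm A), IsNormalLogic L → S ⊆ L → φ ∈ L}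

/-- The five-point model: x=0, y=1, y'=2, z=3, u=4; R = {(x,y),(y',z),(z,u)}. -/
def R8 : Fin 5 → Fin 5 → Prop := fun a b =>
  (a = 0 ∧ b = 1) ∨ (a = 2 ∧ b = 3) ∨ (a = 3 ∧ b = 4)

/-- θ(p)={x}, θ(q)={y,y'}, θ(r)={u} with p,q,r = var 0,1,2. -/
def V8 : ℕ → Fin 5 → Prop := fun n w =>
  (n = 0 ∧ w = 0) ∨ (n = 1 ∧ (w = 1 ∨ w = 2)) ∨ (n = 2 ∧ w = 4)

def M8 : Model Unit := ⟨Fin 5, fun _ => R8, V8⟩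

/-- L = K + {◇◇◇p → ◇p}. -/
def L8 : Set (Fm Unit) :=
  NormalClosure
    {Fm.imp (Fm.dia () (Fm.dia () (Fm.dia () (Fm.var 0)))) (Fm.dia () (Fm.var 0))}

/-- Γ = {p, q, r, ◇r}. -/
def Γ8 : Set (Fm Unit) := {Fm.var 0, Fm.var 1, Fm.var 2, Fm.dia () (Fm.var 2)}

/-! The logic is validated by every frame whose relation contains its own cube; the five-point
frame has no path of length three at all. In any filtration through `∼_Γ` the points `y` and `y'`
collapse, so the filtered relation contains a path `[x] → [y] = [y'] → [z] → [u]` and `[x]`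
satisfies `◇◇◇r`; yet by the filtration lemma `[x]` satisfies `◇r` only if `x` does. -/

section Semantics

variable {A : Type}

theorem sat_substF (M : Model A) (σ : ℕ → Fm A) (φ : Fm A) (x : M.W) :
    Sat M x (substF σ φ) ↔ Sat ⟨M.W, M.R, fun n y => Sat M y (σ n)⟩ x φ := by
  induction φ generalizing x with
  | bot | var => rfl
  | imp φ ψ ihφ ihψ => exact imp_congr (ihφ x) (ihψ x)
  | dia a φ ih => exact exists_congr fun y => and_congr_right' (ih y)

theorem sat_equiv (M : Model A) (x : M.W) (φ ψ : Fm A) :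
    Sat M x (Fm.equiv φ ψ) ↔ (Sat M x φ ↔ Sat M x ψ) := by
  simp only [Fm.equiv, Fm.conj, Fm.neg, Sat]
  tauto

theorem sat_disj (M : Model A) (x : M.W) (φ ψ : Fm A) :
    Sat M x (Fm.disj φ ψ) ↔ Sat M x φ ∨ Sat M x ψ := by
  simp only [Fm.disj, Fm.neg, Sat]
  tauto

def frameLogic (W : Type) (R : A → W → W → Prop) : Set (Fm A) :=
  {φ | ∀ V : ℕ → W → Prop, (⟨W, R, V⟩ : Model A).valid φ}

theorem isNormalLogic_frameLogic (W : Type) (R : A → W → W → Prop) :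
    IsNormalLogic (frameLogic W R) where
  taut φ hφ V x := hφ (Sat ⟨W, R, V⟩ x) id fun _ _ => Iff.rfl
  dia_bot a V x := by simp [sat_equiv, Sat]
  dia_or a φ ψ V x := by simp only [sat_equiv, sat_disj, Sat, and_or_left, exists_or]
  mp φ ψ hφψ hφ V x := hφψ V x (hφ V x)
  subst φ hφ σ V x := (sat_substF _ σ φ x).2 (hφ (fun n y => Sat ⟨W, R, V⟩ y (σ n)) x)
  mono a φ ψ hφψ V x := fun ⟨y, hxy, hy⟩ => ⟨y, hxy, hφψ V y hy⟩

theorem isNormalLogic_normalClosure (S : Set (Fm A)) : IsNormalLogic (NormalClosure S) where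
  taut φ hφ _ hL _ := hL.taut φ hφ
  dia_bot a _ hL _ := hL.dia_bot a
  dia_or a φ ψ _ hL _ := hL.dia_or a φ ψ
  mp φ ψ hφψ hφ L hL hS := hL.mp φ ψ (hφψ L hL hS) (hφ L hL hS)
  subst φ hφ σ L hL hS := hL.subst φ (hφ L hL hS) σ
  mono a φ ψ hφψ L hL hS := hL.mono a φ ψ (hφψ L hL hS)

theorem subset_normalClosure (S : Set (Fm A)) : S ⊆ NormalClosure S :=
  fun _ hφ _ _ hS => hS hφ

theorem normalClosure_subset {S L : Set (Fm A)} (hL : IsNormalLogic L) (hS : S ⊆ L) :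
    NormalClosure S ⊆ L :=
  fun _ hφ => hφ L hL hS

def Fm.dia3ImpDia (a : A) (φ : Fm A) : Fm A :=
  .imp (.dia a (.dia a (.dia a φ))) (.dia a φ)

theorem dia3ImpDia_mem_frameLogic {W : Type} {R : A → W → W → Prop} (a : A) (φ : Fm A)
    (hR : ∀ x y z w, R a x y → R a y z → R a z w → R a x w) :
    Fm.dia3ImpDia a φ ∈ frameLogic W R :=
  fun _ _ ⟨_, hxy, _, hyz, w, hzw, hw⟩ => ⟨w, hR _ _ _ _ hxy hyz hzw, hw⟩

theorem IsModalFiltration.sat_mk_iff {M : Model A} {Γ : Set (Fm A)} {s : Setoid M.W}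
    {R' : A → Quotient s → Quotient s → Prop} {V' : ℕ → Quotient s → Prop}
    (hF : IsModalFiltration M Γ s R' V') (hΓ : SubClosed Γ) :
    ∀ φ ∈ Γ, ∀ x, Sat (filtModel M s R' V') (Quotient.mk s x) φ ↔ Sat M x φ := by
  intro φ
  induction φ with
  | bot => exact fun _ _ => Iff.rfl
  | var n => exact hF.val n
  | imp φ ψ ihφ ihψ =>
    intro hφψ x
    obtain ⟨hφ, hψ⟩ := hΓ.1 φ ψ hφψ
    exact imp_congr (ihφ hφ x) (ihψ hψ x)
  | dia a φ ih =>
    intro hdia x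
    have hφ := hΓ.2 a φ hdia
    constructor
    · rintro ⟨w', hxw, hw⟩
      induction w' using Quotient.inductionOn
      exact hF.sub_max a _ _ hxw φ hdia ((ih hφ _).1 hw)
    · exact fun ⟨y, hxy, hy⟩ => ⟨_, hF.min_sub a x y hxy, (ih hφ y).2 hy⟩

end Semantics

theorem M8_validSet_L8 : M8.validSet L8 := by
  have hR : ∀ x y z w : Fin 5, R8 x y → R8 y z → R8 z w → R8 x w := by
    unfold R8
    decide
  have hL8 : L8 ⊆ frameLogic (Fin 5) (fun _ => R8) :=
    normalClosure_subset (isNormalLogic_frameLogic _ _) <| by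
      rintro _ rfl
      exact dia3ImpDia_mem_frameLogic () _ hR
  exact fun φ hφ => hL8 hφ V8

theorem dia3ImpDia_var_mem_L8 (n : ℕ) : Fm.dia3ImpDia () (Fm.var n) ∈ L8 :=
  (isNormalLogic_normalClosure {Fm.dia3ImpDia () (Fm.var 0)}).subst _
    (subset_normalClosure _ rfl) fun _ => Fm.var n

theorem finite_Γ8 : Γ8.Finite := by
  simp [Γ8]

theorem subClosed_Γ8 : SubClosed Γ8 := by
  simp [SubClosed, Γ8]

theorem modEqv_M8_Γ8_one_two : ModEqv M8 Γ8 (1 : Fin 5) (2 : Fin 5) := by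
  rintro φ (rfl | rfl | rfl | rfl) <;> simp only [Sat, M8, R8, V8] <;> decide

theorem not_sat_M8_zero_dia_r : ¬ Sat M8 (0 : Fin 5) (Fm.dia () (Fm.var 2)) := by
  simp only [Sat, M8, R8, V8]
  decide

/-- K + {◇◇◇p → ◇p} does not admit strict filtration: every Γ-filtration of M8
through ∼_Γ itself refutes ◇◇◇r → ◇r at [x], hence is not a model of the logic. -/
theorem no_strict_filtration :
    M8.validSet L8 ∧ Γ8.Finite ∧ SubClosed Γ8 ∧
    ∀ (R' : Unit → Quotient (eqvSetoid M8 Γ8) → Quotient (eqvSetoid M8 Γ8) → Prop)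
      (V' : ℕ → Quotient (eqvSetoid M8 Γ8) → Prop),
      IsModalFiltration M8 Γ8 (eqvSetoid M8 Γ8) R' V' →
        ¬ Sat (filtModel M8 (eqvSetoid M8 Γ8) R' V')
            (Quotient.mk (eqvSetoid M8 Γ8) (0 : Fin 5))
            (Fm.imp (Fm.dia () (Fm.dia () (Fm.dia () (Fm.var 2)))) (Fm.dia () (Fm.var 2))) ∧
        ¬ (filtModel M8 (eqvSetoid M8 Γ8) R' V').validSet L8 := by
  refine ⟨M8_validSet_L8, finite_Γ8, subClosed_Γ8, fun R' V' hF => ?_⟩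
  set N := filtModel M8 (eqvSetoid M8 Γ8) R' V'
  have hsat := hF.sat_mk_iff subClosed_Γ8
  have hrel (x y : Fin 5) (h : R8 x y) := hF.min_sub () x y h
  have hyy' : Quotient.mk (eqvSetoid M8 Γ8) (1 : Fin 5) = Quotient.mk _ (2 : Fin 5) :=
    Quotient.sound modEqv_M8_Γ8_one_two
  have hu : Sat N (Quotient.mk _ (4 : Fin 5)) (Fm.var 2) :=
    (hsat _ (by simp [Γ8]) (4 : Fin 5)).2 (by simp [Sat, M8, V8])
  have hdia3 : Sat N (Quotient.mk _ (0 : Fin 5)) (Fm.dia () (Fm.dia () (Fm.dia () (Fm.var 2)))) :=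
    ⟨_, hrel 0 1 (by simp [R8]), _, hyy' ▸ hrel 2 3 (by simp [R8]),
      _, hrel 3 4 (by simp [R8]), hu⟩
  have hdia : ¬ Sat N (Quotient.mk _ (0 : Fin 5)) (Fm.dia () (Fm.var 2)) := fun h =>
    not_sat_M8_zero_dia_r ((hsat _ (by simp [Γ8]) (0 : Fin 5)).1 h)
  have hrefuted : ¬ Sat N (Quotient.mk _ (0 : Fin 5)) (Fm.dia3ImpDia () (Fm.var 2)) :=
    fun himp => hdia (himp hdia3)
  exact ⟨hrefuted, fun hvalid => hrefuted (hvalid _ (dia3ImpDia_var_mem_L8 2) _)⟩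
end

section
/- Every locally tabular normal modal logic admits definable filtration. -/
def VarsBelow {A : Type} (k : ℕ) : Fm A → Prop
  | .bot => True
  | .var n => n < k
  | .imp φ ψ => VarsBelow k φ ∧ VarsBelow k ψ
  | .dia _ φ => VarsBelow k φ

/-- For each k there are, up to L-equivalence, only finitely many formulas in
the variables p_0, …, p_{k-1}. -/
def LocallyTabular {A : Type} (L : Set (Fm A)) : Prop :=
  ∀ k : ℕ, ∃ S : Set (Fm A), S.Finite ∧
    ∀ φ : Fm A, VarsBelow k φ → ∃ ψ ∈ S, Fm.equiv φ ψ ∈ L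

/-!
Let `k` bound the variables of `Γ` and let `S` be a finite set of representatives, modulo `L`, of
the formulas in `p₀, …, p_{k-1}`. Since `M` validates `L`, points agreeing on `Δ = Γ ∪ S` agree on
every formula in these variables, so the maximal filtration of `M` through `∼_Δ` with respect to
all such formulas is a finite `Γ`-filtration. It validates `L`: replacing the variables `pₙ`,
`n ≥ k`, of a theorem `θ` of `L` by `⊥` gives a theorem of `L`, true in `M`, hence true in the
filtration by the filtration lemma; there these `pₙ` are false, so `θ` itself is true.
-/

namespace Fm

variable {A : Type}

def varBound : Fm A → ℕ
  | bot => 0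
  | var n => n + 1
  | imp φ ψ => max (varBound φ) (varBound ψ)
  | dia _ φ => varBound φ

theorem varsBelow_of_varBound_le {k : ℕ} : ∀ φ : Fm A, varBound φ ≤ k → VarsBelow k φ
  | bot, _ => trivial
  | var _, h => h
  | imp φ ψ, h => ⟨varsBelow_of_varBound_le φ (le_of_max_le_left h),
      varsBelow_of_varBound_le ψ (le_of_max_le_right h)⟩
  | dia _ φ, h => varsBelow_of_varBound_le φ h

def restrictVars (k : ℕ) (n : ℕ) : Fm A := if n < k then var n else bot

theorem varsBelow_substF_restrictVars (k : ℕ) : ∀ θ : Fm A, VarsBelow k (substF (restrictVars k) θ)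
  | bot => trivial
  | var n => by
    unfold substF restrictVars
    split_ifs with h
    exacts [h, trivial]
  | imp φ ψ => ⟨varsBelow_substF_restrictVars k φ, varsBelow_substF_restrictVars k ψ⟩
  | dia _ φ => varsBelow_substF_restrictVars k φ

end Fm

section Semantics

variable {A : Type}

theorem Set.Finite.exists_subset_setOf_varsBelow {Γ : Set (Fm A)} (hΓ : Γ.Finite) :
    ∃ k, Γ ⊆ {φ | VarsBelow k φ} :=
  ⟨hΓ.toFinset.sup Fm.varBound, fun φ hφ =>
    Fm.varsBelow_of_varBound_le φ (Finset.le_sup (hΓ.mem_toFinset.mpr hφ))⟩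

theorem subClosed_setOf_varsBelow (k : ℕ) : SubClosed {φ : Fm A | VarsBelow k φ} :=
  ⟨fun _ _ h => h, fun _ _ h => h⟩

theorem sat_iff_of_valid_equiv {M : Model A} {φ ψ : Fm A} (h : M.valid (Fm.equiv φ ψ))
    (x : M.W) : Sat M x φ ↔ Sat M x ψ := by
  have hx := h x
  simp only [Fm.equiv, Fm.conj, Fm.neg, Sat] at hx
  tauto

theorem sat_substF_iff {N : Model A} {σ : ℕ → Fm A} (hσ : ∀ n w, Sat N w (σ n) ↔ N.V n w) :
    ∀ (θ : Fm A) (w : N.W), Sat N w (substF σ θ) ↔ Sat N w θ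
  | .bot, _ => Iff.rfl
  | .var n, w => hσ n w
  | .imp φ ψ, w => imp_congr (sat_substF_iff hσ φ w) (sat_substF_iff hσ ψ w)
  | .dia _ φ, _ => exists_congr fun v => and_congr_right' (sat_substF_iff hσ φ v)

theorem ModEqv.of_valid_equiv {M : Model A} {Δ Θ : Set (Fm A)}
    (hΘ : ∀ φ ∈ Θ, ∃ ψ ∈ Δ, M.valid (Fm.equiv φ ψ)) {x y : M.W} (h : ModEqv M Δ x y) :
    ModEqv M Θ x y := by
  intro φ hφ
  obtain ⟨ψ, hψΔ, hφψ⟩ := hΘ φ hφ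
  rw [sat_iff_of_valid_equiv hφψ, sat_iff_of_valid_equiv hφψ]
  exact h ψ hψΔ

theorem finite_quotient_eqvSetoid (M : Model A) {Δ : Set (Fm A)} (hΔ : Δ.Finite) :
    Finite (Quotient (eqvSetoid M Δ)) := by
  have := hΔ.to_subtype
  refine Finite.of_injective (fun q (φ : Δ) => Sat M q.out φ) fun q r h => ?_
  rw [← Quotient.out_eq q, ← Quotient.out_eq r]
  exact Quotient.sound fun φ hφ => iff_of_eq (congrFun h ⟨φ, hφ⟩)

end Semantics

namespace IsModalFiltration

variable {A : Type} {M : Model A} {Γ : Set (Fm A)} {s : Setoid M.W}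
  {R' : A → Quotient s → Quotient s → Prop} {V' : ℕ → Quotient s → Prop}

theorem mono (hfilt : IsModalFiltration M Γ s R' V') {Γ' : Set (Fm A)} (hΓ' : Γ' ⊆ Γ) :
    IsModalFiltration M Γ' s R' V' where
  refines x y h φ hφ := hfilt.refines x y h φ (hΓ' hφ)
  val n hn := hfilt.val n (hΓ' hn)
  min_sub := hfilt.min_sub
  sub_max a x y h φ hφ := hfilt.sub_max a x y h φ (hΓ' hφ)

theorem sat_mk_iff_s13 (hfilt : IsModalFiltration M Γ s R' V') (hΓ : SubClosed Γ) :
    ∀ φ ∈ Γ, ∀ x : M.W, Sat (filtModel M s R' V') (Quotient.mk s x) φ ↔ Sat M x φ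
  | .bot, _, _ => Iff.rfl
  | .var n, hφ, x => hfilt.val n hφ x
  | .imp φ ψ, hφ, x =>
    imp_congr (sat_mk_iff_s13 hfilt hΓ φ (hΓ.1 φ ψ hφ).1 x) (sat_mk_iff_s13 hfilt hΓ ψ (hΓ.1 φ ψ hφ).2 x)
  | .dia a φ, hφ, x => by
    have ih := sat_mk_iff_s13 hfilt hΓ φ (hΓ.2 a φ hφ)
    constructor
    · rintro ⟨r, hxr, hr⟩
      obtain ⟨y, rfl⟩ := Quotient.exists_rep r
      exact hfilt.sub_max a x y hxr φ hφ ((ih y).mp hr)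
    · rintro ⟨y, hxy, hy⟩
      exact ⟨Quotient.mk s y, hfilt.min_sub a x y hxy, (ih y).mpr hy⟩

end IsModalFiltration

section MaximalFiltration

variable {A : Type} (M : Model A) (s : Setoid M.W) (Θ : Set (Fm A))

def maxFiltRel (a : A) (q r : Quotient s) : Prop :=
  ∃ x y : M.W, q = Quotient.mk s x ∧ r = Quotient.mk s y ∧
    ∀ φ ∈ Θ, Sat M y φ → Sat M x (Fm.dia a φ)

def maxFiltVal (n : ℕ) (q : Quotient s) : Prop :=
  Fm.var n ∈ Θ ∧ ∃ x : M.W, q = Quotient.mk s x ∧ M.V n x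

variable {M s Θ}

theorem isModalFiltration_maxFilt (hΘ : SubClosed Θ) (hs : ∀ x y, s.r x y → ModEqv M Θ x y) :
    IsModalFiltration M Θ s (maxFiltRel M s Θ) (maxFiltVal M s Θ) where
  refines := hs
  val n hn x := ⟨fun ⟨_, _, hx, hV⟩ => (hs _ _ (Quotient.exact hx) (.var n) hn).mpr hV,
    fun hV => ⟨hn, x, rfl, hV⟩⟩
  min_sub a x y hxy := ⟨x, y, rfl, rfl, fun _ _ hφ => ⟨y, hxy, hφ⟩⟩
  sub_max a x y := by
    rintro ⟨x', y', hx, hy, hx'y'⟩ φ hdia hφ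
    have hφΘ := hΘ.2 a φ hdia
    rw [hs _ _ (Quotient.exact hx) _ hdia]
    exact hx'y' φ hφΘ ((hs _ _ (Quotient.exact hy) φ hφΘ).mp hφ)

theorem validSet_filtModel_maxFiltVal {L : Set (Fm A)}
    (hL : ∀ φ ∈ L, ∀ σ : ℕ → Fm A, substF σ φ ∈ L) (hM : M.validSet L) {k : ℕ}
    {R' : A → Quotient s → Quotient s → Prop}
    (hfilt : IsModalFiltration M {φ | VarsBelow k φ} s R' (maxFiltVal M s {φ | VarsBelow k φ})) :
    (filtModel M s R' (maxFiltVal M s {φ | VarsBelow k φ})).validSet L := by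
  have hσ : ∀ n (q : Quotient s), Sat (filtModel M s R' (maxFiltVal M s {φ | VarsBelow k φ})) q
      (Fm.restrictVars k n) ↔ maxFiltVal M s {φ | VarsBelow k φ} n q := by
    intro n q
    unfold Fm.restrictVars
    split_ifs with hn
    · rfl
    · exact iff_of_false id fun h => hn h.1
  intro θ hθ q
  obtain ⟨x, rfl⟩ := Quotient.exists_rep q
  exact (sat_substF_iff hσ θ _).mp <| (hfilt.sat_mk_iff_s13 (subClosed_setOf_varsBelow k) _
    (Fm.varsBelow_substF_restrictVars k θ) x).mpr (hM _ (hL θ hθ _) x)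

end MaximalFiltration

theorem locally_tabular_admits_definable_filtration_general {A : Type}
    (L : Set (Fm A)) (hL : IsNormalLogic L) (hlt : LocallyTabular L) :
    AdmitsDefFilt L := by
  intro M hM Γ hΓ _
  obtain ⟨k, hΓk⟩ := hΓ.exists_subset_setOf_varsBelow
  obtain ⟨S, hS, hSrep⟩ := hlt k
  have hΔ : (Γ ∪ S).Finite := hΓ.union hS
  have hs : ∀ x y, (eqvSetoid M (Γ ∪ S)).r x y → ModEqv M {φ | VarsBelow k φ} x y :=
    fun _ _ => ModEqv.of_valid_equiv fun φ hφ =>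
      let ⟨ψ, hψS, hφψ⟩ := hSrep φ hφ
      ⟨ψ, Or.inr hψS, hM _ hφψ⟩
  have hfilt := isModalFiltration_maxFilt (subClosed_setOf_varsBelow k) hs
  exact ⟨Γ ∪ S, hΔ, Set.subset_union_left, _, _, finite_quotient_eqvSetoid M hΔ,
    hfilt.mono hΓk, validSet_filtModel_maxFiltVal hL.subst hM hfilt⟩

/-- Every locally tabular normal modal logic admits definable filtration. -/
theorem locally_tabular_admits_definable_filtration {A : Type} [Finite A]
    (L : Set (Fm A)) (hL : IsNormalLogic L) (hlt : LocallyTabular L) :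
    AdmitsDefFilt L :=
  locally_tabular_admits_definable_filtration_general L hL hlt
end
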